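/- arXiv:1302.4635 — 3 statements merged into one kernel-verified Lean document; each statement's English description precedes it below -/
import Mathlib

section
/- If Δ is a simplicial forest (every nonempty subcollection of Δ has a leaf) and F is a face of Δ, then the link of F in Δ is a simplicial forest. -/
/-- The dimension of the kernel of `g` modulo the image of `f`. -/
noncomputable def quotDim (k : Type*) [Field k] {M N P : Type*}
    [AddCommGroup M] [Module k M] [AddCommGroup N] [Module k N]
    [AddCommGroup P] [Module k P] (f : M →ₗ[k] N) (g : N →ₗ[k] P) : ℕ :=
  Module.finrank k ((LinearMap.ker g) ⧸
    Submodule.comap (LinearMap.ker g).subtype (LinearMap.range f))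

/-- The dimension of the cokernel of `f`. -/
noncomputable def cokerDim (k : Type*) [Field k] {M N : Type*}
    [AddCommGroup M] [Module k M] [AddCommGroup N] [Module k N]
    (f : M →ₗ[k] N) : ℕ :=
  Module.finrank k (N ⧸ LinearMap.range f)

/-- An abstract simplicial complex on vertex type `V`: a collection of finite
subsets of `V` closed under taking subsets. -/
structure SComplex (V : Type*) where
  faces : Set (Finset V)
  down_closed : ∀ {F G : Finset V}, F ∈ faces → G ⊆ F → G ∈ faces

namespace SComplex

variable {V : Type*}

/-- The facets (maximal faces) of a simplicial complex. -/
def facets (Δ : SComplex V) : Set (Finset V) :=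
  {F | F ∈ Δ.faces ∧ ∀ G ∈ Δ.faces, F ⊆ G → F = G}

/-- `G` is a joint of `F` in `Δ`: `G` is a facet different from `F` with
`F ∩ H ⊆ G` for all facets `H ≠ F`. -/
def IsJoint [DecidableEq V] (Δ : SComplex V) (F G : Finset V) : Prop :=
  G ∈ Δ.facets ∧ G ≠ F ∧ ∀ H ∈ Δ.facets, H ≠ F → F ∩ H ⊆ G

/-- A facet `F` is a leaf if it is the only facet, or it has a joint. -/
def IsLeaf [DecidableEq V] (Δ : SComplex V) (F : Finset V) : Prop :=
  F ∈ Δ.facets ∧ ((∀ H ∈ Δ.facets, H = F) ∨ ∃ G, Δ.IsJoint F G)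

/-- The simplicial complex generated by a collection of finite sets. -/
def generated (S : Set (Finset V)) : SComplex V where
  faces := {F | ∃ G ∈ S, F ⊆ G}
  down_closed := fun hF h => by
    obtain ⟨G, hG, hFG⟩ := hF
    exact ⟨G, hG, h.trans hFG⟩

/-- A forest: every nonempty subcollection (complex generated by a subset of
the facets) has a leaf. -/
def Forest [DecidableEq V] (Δ : SComplex V) : Prop :=
  ∀ S ⊆ Δ.facets, S.Nonempty → ∃ F, (generated S).IsLeaf F

/-- The link of a (finite) set `F` in `Δ`. -/
def link [DecidableEq V] (Δ : SComplex V) (F : Finset V) : SComplex V where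
  faces := {G | F ∩ G = ∅ ∧ F ∪ G ∈ Δ.faces}
  down_closed := fun {G G'} hG h => by
    obtain ⟨h1, h2⟩ := hG
    constructor
    · apply Finset.subset_empty.mp
      calc F ∩ G' ⊆ F ∩ G := Finset.inter_subset_inter (Finset.Subset.refl F) h
        _ = ∅ := h1
    · exact Δ.down_closed h2 (Finset.union_subset_union_right h)

/-- The induced subcomplex on a set `A` of vertices. -/
def induced (Δ : SComplex V) (A : Set V) : SComplex V where
  faces := {F | F ∈ Δ.faces ∧ ↑F ⊆ A}
  down_closed := fun hF h =>
    ⟨Δ.down_closed hF.1 h, fun x hx => hF.2 (Finset.coe_subset.mpr h hx)⟩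

/-- Reachability between facets via chains of facets with consecutive
nonempty intersections. -/
def reach [DecidableEq V] (Δ : SComplex V) : Finset V → Finset V → Prop :=
  Relation.ReflTransGen (fun H K => H ∈ Δ.facets ∧ K ∈ Δ.facets ∧ (H ∩ K).Nonempty)

/-- A simplicial complex is connected if any two facets are joined by a chain
of facets with pairwise consecutive nonempty intersections. -/
def Connected [DecidableEq V] (Δ : SComplex V) : Prop :=
  ∀ F ∈ Δ.facets, ∀ G ∈ Δ.facets, Δ.reach F G

/-- A tree: a connected forest. -/
def Tree [DecidableEq V] (Δ : SComplex V) : Prop := Δ.Connected ∧ Δ.Forest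

/-- The number of connected components: the number of classes of facets under
the equivalence generated by having nonempty intersection. -/
noncomputable def numComponents [DecidableEq V] (Δ : SComplex V) : ℕ :=
  Nat.card (Quot (fun F G : Δ.facets => (F.1 ∩ G.1).Nonempty))

/-- The connected component of a facet `F`: the subcollection generated by all
facets reachable from `F`. -/
def component [DecidableEq V] (Δ : SComplex V) (F : Finset V) : SComplex V :=
  generated {G | G ∈ Δ.facets ∧ Δ.reach F G}

/-- The faces of `Δ` of cardinality `n`. -/
def Face (Δ : SComplex V) (n : ℕ) : Type _ := {F : Finset V // F ∈ Δ.faces ∧ F.card = n}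

/-- Simplicial chains with coefficients in `k`, in "chain degree" `n`:
formal `k`-linear combinations of faces of cardinality `n` (dimension `n-1`). -/
abbrev Chains (k : Type*) [Field k] (Δ : SComplex V) (n : ℕ) := Δ.Face n →₀ k

/-- The simplicial boundary map from chain degree `n+1` to chain degree `n`,
given by the alternating sum of vertex deletions (vertices ordered by the
linear order on `V`). -/
noncomputable def boundary [LinearOrder V] (k : Type*) [Field k] (Δ : SComplex V) (n : ℕ) :
    Δ.Chains k (n + 1) →ₗ[k] Δ.Chains k n :=
  Finsupp.lsum k fun F =>
    ∑ v ∈ F.1.attach,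
      ((-1 : k) ^ (F.1.filter (· < v.1)).card) •
        Finsupp.lsingle (⟨F.1.erase v.1,
          Δ.down_closed F.2.1 (Finset.erase_subset _ _), by
            have h := F.2.2
            rw [Finset.card_erase_of_mem v.2, h]
            omega⟩ : Δ.Face n)

/-- The dimension (over `k`) of the reduced simplicial homology in chain degree
`c`; that is, `redHomDim k Δ c = dim_k H̃_{c-1}(Δ; k)`. -/
noncomputable def redHomDim [LinearOrder V] (k : Type*) [Field k] (Δ : SComplex V) : ℕ → ℕ
  | 0 => cokerDim k (Δ.boundary k 0)
  | (c + 1) => quotDim k (Δ.boundary k (c + 1)) (Δ.boundary k c)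

/-- Reduced homology dimension indexed by an integer `d`:
`redHomDimZ k Δ d = dim_k H̃_d(Δ; k)`, which is `0` for `d < -1`. -/
noncomputable def redHomDimZ [LinearOrder V] (k : Type*) [Field k] (Δ : SComplex V) (d : ℤ) : ℕ :=
  if d < -1 then 0 else Δ.redHomDim k (d + 1).toNat

end SComplex

/-- If `S` consists of facets of some complex, the facets of the complex it
generates are exactly the elements of `S`. -/
lemma facets_generated {V : Type*} (Δ : SComplex V) (S : Set (Finset V))
    (hS : S ⊆ Δ.facets) : (SComplex.generated S).facets = S := by
  ext H
  constructor
  · rintro ⟨⟨G, hG, hHG⟩, hmax⟩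
    have : H = G := hmax G ⟨G, hG, Finset.Subset.refl G⟩ hHG
    rwa [this]
  · intro hH
    refine ⟨⟨H, hH, Finset.Subset.refl H⟩, ?_⟩
    rintro G ⟨G', hG', hGG'⟩ hHG
    have h1 : H = G' := (hS hH).2 G' (hS hG').1 (hHG.trans hGG')
    exact Finset.Subset.antisymm hHG (h1 ▸ hGG')

/-- The link of a face of a simplicial forest is a simplicial forest. -/
theorem link_of_forest_isForest {V : Type*} [DecidableEq V] (Δ : SComplex V)
    (hΔ : Δ.Forest) (F : Finset V) (hF : F ∈ Δ.faces) :
    (Δ.link F).Forest := by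
  intro S hS hSne
  -- every element of S is disjoint from F
  have hdisj : ∀ G ∈ S, F ∩ G = ∅ := fun G hG => (hS hG).1.1
  -- F ∪ G is a facet of Δ for G ∈ S
  have key : ∀ G ∈ S, F ∪ G ∈ Δ.facets := by
    intro G hG
    refine ⟨(hS hG).1.2, ?_⟩
    intro H hH hsub
    have hFH : F ⊆ H := (Finset.union_subset_iff.mp hsub).1
    have hGH : G ⊆ H := (Finset.union_subset_iff.mp hsub).2
    have hmem : H \ F ∈ (Δ.link F).faces := by
      constructor
      · exact Finset.inter_sdiff_self F H
      · have : F ∪ (H \ F) = H := by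
          rw [Finset.union_sdiff_self_eq_union, Finset.union_eq_right.mpr hFH]
        rwa [this]
    have hGsub : G ⊆ H \ F := by
      intro x hx
      refine Finset.mem_sdiff.mpr ⟨hGH hx, fun hxF => ?_⟩
      have : x ∈ F ∩ G := Finset.mem_inter.mpr ⟨hxF, hx⟩
      simp [hdisj G hG] at this
    have hGeq : G = H \ F := (hS hG).2 (H \ F) hmem hGsub
    rw [hGeq, Finset.union_sdiff_self_eq_union, Finset.union_eq_right.mpr hFH]
  -- the corresponding set of facets of Δ
  set T : Set (Finset V) := (fun G => F ∪ G) '' S with hTdef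
  have hTsub : T ⊆ Δ.facets := by
    rintro _ ⟨G, hG, rfl⟩
    exact key G hG
  have hTne : T.Nonempty := hSne.image _
  obtain ⟨L, hLfac, hLcase⟩ := hΔ T hTsub hTne
  rw [facets_generated Δ T hTsub] at hLfac
  obtain ⟨G₀, hG₀S, rfl⟩ := hLfac
  -- injectivity of G ↦ F ∪ G on S
  have hinj : ∀ G ∈ S, ∀ G' ∈ S, F ∪ G = F ∪ G' → G = G' := by
    intro G hG G' hG' h
    have d1 : Disjoint F G := Finset.disjoint_iff_inter_eq_empty.mpr (hdisj G hG)
    have d2 : Disjoint F G' := Finset.disjoint_iff_inter_eq_empty.mpr (hdisj G' hG')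
    calc G = (F ∪ G) \ F := (Finset.union_sdiff_cancel_left d1).symm
      _ = (F ∪ G') \ F := by rw [h]
      _ = G' := Finset.union_sdiff_cancel_left d2
  have hSfac : (SComplex.generated S).facets = S :=
    facets_generated (Δ.link F) S hS
  refine ⟨G₀, ?_, ?_⟩
  · rw [hSfac]; exact hG₀S
  rcases hLcase with honly | ⟨K, hKfac, hKne, hKjoint⟩
  · left
    intro H hH
    rw [hSfac] at hH
    have : F ∪ H = F ∪ G₀ := by
      apply honly
      rw [facets_generated Δ T hTsub]
      exact ⟨H, hH, rfl⟩
    exact hinj H hH G₀ hG₀S this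
  · right
    rw [facets_generated Δ T hTsub] at hKfac
    obtain ⟨G₁, hG₁S, rfl⟩ := hKfac
    refine ⟨G₁, ?_, ?_, ?_⟩
    · rw [hSfac]; exact hG₁S
    · intro h; exact hKne (by rw [h])
    · intro H hH hHne
      rw [hSfac] at hH
      intro x hx
      obtain ⟨hxG₀, hxH⟩ := Finset.mem_inter.mp hx
      have hxnF : x ∉ F := fun hxF => by
        have : x ∈ F ∩ G₀ := Finset.mem_inter.mpr ⟨hxF, hxG₀⟩
        simp [hdisj G₀ hG₀S] at this
      have hFH : F ∪ H ∈ (SComplex.generated T).facets := by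
        rw [facets_generated Δ T hTsub]; exact ⟨H, hH, rfl⟩
      have hFHne : F ∪ H ≠ F ∪ G₀ := fun h => hHne (hinj H hH G₀ hG₀S h)
      have hxK : x ∈ F ∪ G₁ := by
        apply hKjoint (F ∪ H) hFH hFHne
        exact Finset.mem_inter.mpr ⟨Finset.mem_union_right F hxG₀,
          Finset.mem_union_right F hxH⟩
      rcases Finset.mem_union.mp hxK with h | h
      · exact absurd h hxnF
      · exact h
end

section
/- Let Δ be a simplicial forest, F a face of Δ, and write lk_Δ(F) = ⟨G_1,…,G_s⟩ where each facet G_i of the link satisfies F ∪ G_i is a facet F_i of Δ with F ∩ G_i = ∅. If the subcollection ⟨F_{a_1},…,F_{a_r}⟩ of Δ has F_{a_1} as a leaf with joint F_{a_2}, then G_{a_1} is a leaf of the subcollection ⟨G_{a_1},…,G_{a_r}⟩ of lk_Δ(F), with joint G_{a_2}. -/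
/-- If `Δ` is a forest, `F` a face, the `𝒢 i` are facets of `lk_Δ F`
with `F ∪ 𝒢 i` a facet of `Δ` and `F ∩ 𝒢 i = ∅`, and the subcollection generated by
the `F ∪ 𝒢 i` has `F ∪ 𝒢 0` as a leaf with joint `F ∪ 𝒢 1`, then `𝒢 0` is a leaf of
the subcollection generated by the `𝒢 i`, with joint `𝒢 1`. -/
theorem link_subcollection_leaf {V : Type*} [DecidableEq V] (Δ : SComplex V)
    (hΔ : Δ.Forest) (F : Finset V) (hF : F ∈ Δ.faces)
    (r : ℕ) (h0 : 0 < r) (h1 : 1 < r) (𝒢 : Fin r → Finset V)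
    (hlink : ∀ i, 𝒢 i ∈ (Δ.link F).facets)
    (hdisj : ∀ i, F ∩ 𝒢 i = ∅)
    (hfacet : ∀ i, F ∪ 𝒢 i ∈ Δ.facets)
    (hleaf : F ∪ 𝒢 ⟨0, h0⟩ ∈ (SComplex.generated (Set.range fun i => F ∪ 𝒢 i)).facets)
    (hjoint : (SComplex.generated (Set.range fun i => F ∪ 𝒢 i)).IsJoint
        (F ∪ 𝒢 ⟨0, h0⟩) (F ∪ 𝒢 ⟨1, h1⟩)) :
    𝒢 ⟨0, h0⟩ ∈ (SComplex.generated (Set.range 𝒢)).facets ∧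
      (SComplex.generated (Set.range 𝒢)).IsJoint (𝒢 ⟨0, h0⟩) (𝒢 ⟨1, h1⟩) := by
  have hmax : ∀ i j : Fin r, 𝒢 i ⊆ 𝒢 j → 𝒢 i = 𝒢 j := by
    intro i j hij
    have h2 := (hfacet i).2 _ (hfacet j).1 (Finset.union_subset_union_right hij)
    have hdi : Disjoint F (𝒢 i) := Finset.disjoint_iff_inter_eq_empty.mpr (hdisj i)
    have hdj : Disjoint F (𝒢 j) := Finset.disjoint_iff_inter_eq_empty.mpr (hdisj j)
    calc 𝒢 i = (F ∪ 𝒢 i) \ F := (Finset.union_sdiff_cancel_left hdi).symm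
      _ = (F ∪ 𝒢 j) \ F := by rw [h2]
      _ = 𝒢 j := Finset.union_sdiff_cancel_left hdj
  have hfacetG : ∀ i, 𝒢 i ∈ (SComplex.generated (Set.range 𝒢)).facets := by
    intro i
    refine ⟨⟨𝒢 i, ⟨i, rfl⟩, subset_rfl⟩, ?_⟩
    rintro G ⟨_, ⟨j, rfl⟩, hG⟩ hiG
    have := hmax i j (hiG.trans hG)
    exact subset_antisymm hiG (this ▸ hG)
  have hfacetFG : ∀ i, (F ∪ 𝒢 i) ∈ (SComplex.generated (Set.range fun i => F ∪ 𝒢 i)).facets := by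
    intro i
    refine ⟨⟨F ∪ 𝒢 i, ⟨i, rfl⟩, subset_rfl⟩, ?_⟩
    rintro G ⟨_, ⟨j, rfl⟩, hG⟩ hiG
    have h2 := (hfacet i).2 _ (hfacet j).1 (hiG.trans hG)
    exact subset_antisymm hiG (h2 ▸ hG)
  refine ⟨hfacetG _, hfacetG _, ?_, ?_⟩
  · intro h
    exact hjoint.2.1 (by rw [h])
  · rintro H hH hne
    obtain ⟨_, ⟨j, rfl⟩, hHj⟩ := hH.1
    have hHeq : H = 𝒢 j := hH.2 _ ⟨𝒢 j, ⟨j, rfl⟩, subset_rfl⟩ hHj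
    subst hHeq
    have hne' : F ∪ 𝒢 j ≠ F ∪ 𝒢 ⟨0, h0⟩ := by
      intro h
      apply hne
      have hdj : Disjoint F (𝒢 j) := Finset.disjoint_iff_inter_eq_empty.mpr (hdisj j)
      have hd0 : Disjoint F (𝒢 ⟨0, h0⟩) := Finset.disjoint_iff_inter_eq_empty.mpr (hdisj _)
      calc 𝒢 j = (F ∪ 𝒢 j) \ F := (Finset.union_sdiff_cancel_left hdj).symm
        _ = (F ∪ 𝒢 ⟨0, h0⟩) \ F := by rw [h]
        _ = 𝒢 ⟨0, h0⟩ := Finset.union_sdiff_cancel_left hd0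
    have hsub := hjoint.2.2 _ (hfacetFG j) hne'
    intro x hx
    simp only [Finset.mem_inter] at hx
    have hx1 : x ∈ (F ∪ 𝒢 ⟨0, h0⟩) ∩ (F ∪ 𝒢 j) := by
      simp [Finset.mem_inter, Finset.mem_union, hx.1, hx.2]
    rcases Finset.mem_union.mp (hsub hx1) with h | h
    · exfalso
      have : x ∈ F ∩ 𝒢 ⟨0, h0⟩ := Finset.mem_inter.mpr ⟨h, hx.1⟩
      rw [hdisj _] at this
      exact Finset.notMem_empty x this
    · exact h
end

section
/- Every nonempty simplicial tree is acyclic: if Δ is a connected simplicial complex in which every nonempty subcollection has a leaf, then all reduced simplicial homology groups of Δ with field coefficients vanish. -/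
namespace SComplex

section Aux

set_option linter.unusedVariables false
set_option linter.unusedSectionVars false

variable {V : Type*} [LinearOrder V] {k : Type*} [Field k]

open Classical in
/-- A "total" single chain. -/
noncomputable def sgl (Δ : SComplex V) (n : ℕ) (τ : Finset V) (c : k) : Δ.Chains k n :=
  if h : τ ∈ Δ.faces ∧ τ.card = n then Finsupp.single ⟨τ, h⟩ c else 0

lemma single_eq_sgl (Δ : SComplex V) {n : ℕ} (σ : Δ.Face n) (c : k) :
    Finsupp.single σ c = Δ.sgl n σ.1 c := by
  rw [sgl, dif_pos σ.2]
  rfl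

lemma sgl_of_neg (Δ : SComplex V) {n : ℕ} {τ : Finset V}
    (h : ¬ (τ ∈ Δ.faces ∧ τ.card = n)) (c : k) : Δ.sgl n τ c = 0 := by
  rw [sgl, dif_neg h]

lemma boundary_sgl (Δ : SComplex V) (n : ℕ) (τ : Finset V)
    (h : τ ∈ Δ.faces ∧ τ.card = n + 1) (c : k) :
    Δ.boundary k n (Δ.sgl (n+1) τ c) =
      ∑ v ∈ τ, ((-1 : k) ^ ((τ.filter (· < v)).card)) • Δ.sgl n (τ.erase v) c := by
  rw [sgl, dif_pos h, boundary]
  erw [Finsupp.lsum_single]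
  rw [LinearMap.sum_apply,
    ← Finset.sum_attach τ (fun v => ((-1:k) ^ ((τ.filter (· < v)).card)) • Δ.sgl n (τ.erase v) c)]
  refine Finset.sum_congr rfl (fun v _ => ?_)
  erw [LinearMap.smul_apply, Finsupp.lsingle_apply, single_eq_sgl]
  rfl

lemma pow_pred {a : ℕ} (h : 0 < a) : (-1:k)^(a-1) = -(-1:k)^a := by
  obtain ⟨b, rfl⟩ : ∃ b, a = b+1 := ⟨a-1, by omega⟩
  simp [pow_succ]

lemma sign_cancel_aux (τ : Finset V) {u v : V} (hu : u ∈ τ) (h : u < v) :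
    ((-1:k)^((τ.filter (· < v)).card) * (-1:k)^(((τ.erase v).filter (· < u)).card))
    = -((-1:k)^((τ.filter (· < u)).card) * (-1:k)^(((τ.erase u).filter (· < v)).card)) := by
  rw [Finset.filter_erase, Finset.filter_erase]
  have h1 : (τ.filter (· < u)).erase v = τ.filter (· < u) :=
    Finset.erase_eq_of_notMem (fun hc => absurd (Finset.mem_filter.mp hc).2 (asymm h))
  have hm : u ∈ τ.filter (· < v) := Finset.mem_filter.mpr ⟨hu, h⟩
  have h2 : ((τ.filter (· < v)).erase u).card = (τ.filter (· < v)).card - 1 :=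
    Finset.card_erase_of_mem hm
  rw [h1, h2, pow_pred (a := (τ.filter (· < v)).card) (Finset.card_pos.mpr ⟨u, hm⟩)]
  ring

lemma sign_cancel (τ : Finset V) {u v : V} (hu : u ∈ τ) (hv : v ∈ τ) (huv : u ≠ v) :
    ((-1:k)^((τ.filter (· < v)).card) * (-1:k)^(((τ.erase v).filter (· < u)).card))
    = -((-1:k)^((τ.filter (· < u)).card) * (-1:k)^(((τ.erase u).filter (· < v)).card)) := by
  rcases huv.lt_or_gt with h | h
  · exact sign_cancel_aux τ hu h
  · rw [sign_cancel_aux τ hv h]; ring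

lemma boundary_boundary (Δ : SComplex V) (n : ℕ) (x : Δ.Chains k (n+2)) :
    Δ.boundary k n (Δ.boundary k (n+1) x) = 0 := by
  induction x using Finsupp.induction_linear with
  | zero => simp
  | add f g hf hg => rw [map_add, map_add, hf, hg, add_zero]
  | single σ c =>
    rw [single_eq_sgl, boundary_sgl Δ (n+1) σ.1 σ.2, map_sum]
    have step : ∀ v ∈ σ.1,
        Δ.boundary k n (((-1:k) ^ ((σ.1.filter (· < v)).card)) • Δ.sgl (n+1) (σ.1.erase v) c)
        = ∑ u ∈ σ.1.erase v,
            (((-1:k) ^ ((σ.1.filter (· < v)).card)) *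
              ((-1:k) ^ (((σ.1.erase v).filter (· < u)).card))) •
              Δ.sgl n ((σ.1.erase v).erase u) c := by
      intro v hv
      rw [map_smul, boundary_sgl Δ n (σ.1.erase v)
        ⟨Δ.down_closed σ.2.1 (Finset.erase_subset _ _), by
          rw [Finset.card_erase_of_mem hv, σ.2.2]; omega⟩ c, Finset.smul_sum]
      exact Finset.sum_congr rfl (fun u _ => by rw [smul_smul])
    rw [Finset.sum_congr rfl step, Finset.sum_sigma' σ.1 (fun v => σ.1.erase v)]
    refine Finset.sum_involution (fun p _ => ⟨p.2, p.1⟩) ?_ ?_ ?_ ?_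
    · intro p hp
      rw [Finset.mem_sigma] at hp
      have hne : p.2 ≠ p.1 := (Finset.mem_erase.mp hp.2).1
      have h2 : p.2 ∈ σ.1 := Finset.mem_of_mem_erase hp.2
      rw [Finset.erase_right_comm (a := p.1) (b := p.2),
        sign_cancel σ.1 h2 hp.1 hne, neg_smul, neg_add_cancel]
    · intro p hp _
      rw [Finset.mem_sigma] at hp
      intro hc
      exact (Finset.mem_erase.mp hp.2).1 (congrArg Sigma.fst hc)
    · intro p hp
      rw [Finset.mem_sigma] at hp ⊢
      exact ⟨Finset.mem_of_mem_erase hp.2,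
        Finset.mem_erase.mpr ⟨fun hc => (Finset.mem_erase.mp hp.2).1 hc.symm, hp.1⟩⟩
    · intro p _; rfl

section Homotopy

set_option linter.unusedVariables false
set_option linter.unusedSectionVars false
set_option maxHeartbeats 1000000

variable {V : Type*} [LinearOrder V] {k : Type*} [Field k]
variable (Δ : SComplex V) (w : V) (r : Finset V → Prop)

open Classical in
/-- Cone homotopy with apex `w`, applied only on faces satisfying `r`. -/
noncomputable def hmap (h2 : ∀ σ, r σ → w ∉ σ → insert w σ ∈ Δ.faces) (n : ℕ) :
    Δ.Chains k n →ₗ[k] Δ.Chains k (n+1) :=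
  Finsupp.lsum k fun τ =>
    if h : r τ.1 ∧ w ∉ τ.1 then
      ((-1:k)^((τ.1.filter (· < w)).card)) •
        Finsupp.lsingle (⟨insert w τ.1, h2 τ.1 h.1 h.2, by
          rw [Finset.card_insert_of_notMem h.2, τ.2.2]⟩ : Δ.Face (n+1))
    else 0

open Classical in
lemma hmap_sgl (h2 : ∀ σ, r σ → w ∉ σ → insert w σ ∈ Δ.faces) (n : ℕ) (τ : Finset V)
    (hτ : τ ∈ Δ.faces) (hc : τ.card = n) (c : k) :
    hmap Δ w r h2 n (Δ.sgl n τ c) =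
      if r τ ∧ w ∉ τ then ((-1:k)^((τ.filter (· < w)).card)) • Δ.sgl (n+1) (insert w τ) c
      else 0 := by
  rw [sgl, dif_pos ⟨hτ, hc⟩, hmap]
  erw [Finsupp.lsum_single]
  by_cases h : r τ ∧ w ∉ τ
  · rw [dif_pos h, if_pos h]
    erw [LinearMap.smul_apply, Finsupp.lsingle_apply, single_eq_sgl]
    rfl
  · rw [dif_neg h, if_neg h, LinearMap.zero_apply]

/-- The submodule of chains supported away from `r`. -/
noncomputable def nsub (m : ℕ) : Submodule k (Δ.Chains k m) :=
  Finsupp.supported k k {τ : Δ.Face m | ¬ r τ.1}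

lemma sgl_mem_nsub (m : ℕ) (τ : Finset V) (c : k) (h : ¬ r τ) :
    Δ.sgl m τ c ∈ nsub Δ r m := by
  by_cases hf : τ ∈ Δ.faces ∧ τ.card = m
  · rw [sgl, dif_pos hf]
    exact Finsupp.single_mem_supported k c h
  · rw [sgl_of_neg Δ hf]
    exact zero_mem _

lemma sign_cancel2 (τ : Finset V) {v wx : V} (hv : v ∈ τ) (hw : wx ∉ τ) :
    (-1:k)^((τ.filter (· < wx)).card) * (-1:k)^(((insert wx τ).filter (· < v)).card)
    = -((-1:k)^((τ.filter (· < v)).card) * (-1:k)^(((τ.erase v).filter (· < wx)).card)) := by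
  have hvw : v ≠ wx := fun h => hw (h ▸ hv)
  rw [Finset.filter_insert, Finset.filter_erase]
  rcases hvw.lt_or_gt with h | h
  · rw [if_neg (asymm h)]
    have hm : v ∈ τ.filter (· < wx) := Finset.mem_filter.mpr ⟨hv, h⟩
    rw [Finset.card_erase_of_mem hm,
      pow_pred (a := (τ.filter (· < wx)).card) (Finset.card_pos.mpr ⟨v, hm⟩)]
    ring
  · rw [if_pos h, Finset.card_insert_of_notMem (fun hcx => hw (Finset.mem_filter.mp hcx).1)]
    have he : (τ.filter (· < wx)).erase v = τ.filter (· < wx) :=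
      Finset.erase_eq_of_notMem
        (fun hcx : v ∈ τ.filter (· < wx) => absurd (Finset.mem_filter.mp hcx).2 (asymm h))
    rw [he, pow_succ]
    ring

lemma key (h2 : ∀ σ, r σ → w ∉ σ → insert w σ ∈ Δ.faces)
    (h4 : ∀ σ, σ ∈ Δ.faces → ¬ r σ → ∀ v, ¬ r (σ.erase v))
    (h5 : ∀ σ v, r σ → w ∉ σ → v ∈ σ → ¬ r (σ.erase v) → ¬ r (insert w (σ.erase v)))
    (h6 : ∀ σ, r σ → w ∈ σ → r (σ.erase w))
    (n : ℕ) (x : Δ.Chains k (n+1)) :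
    Δ.boundary k (n+1) (hmap Δ w r h2 (n+1) x) + hmap Δ w r h2 n (Δ.boundary k n x) - x
      ∈ nsub Δ r (n+1) := by
  induction x using Finsupp.induction_linear with
  | zero => simpa using zero_mem (nsub Δ r (n+1))
  | add f g hf hg =>
    have : Δ.boundary k (n+1) (hmap Δ w r h2 (n+1) (f + g)) +
        hmap Δ w r h2 n (Δ.boundary k n (f + g)) - (f + g)
        = (Δ.boundary k (n+1) (hmap Δ w r h2 (n+1) f) +
            hmap Δ w r h2 n (Δ.boundary k n f) - f) +
          (Δ.boundary k (n+1) (hmap Δ w r h2 (n+1) g) +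
            hmap Δ w r h2 n (Δ.boundary k n g) - g) := by
      rw [map_add, map_add, map_add, map_add]
      abel
    rw [this]
    exact add_mem hf hg
  | single σ c =>
    have hτ : σ.1 ∈ Δ.faces := σ.2.1
    have hc : σ.1.card = n + 1 := σ.2.2
    rw [single_eq_sgl]
    by_cases hr : r σ.1
    · by_cases hw : w ∈ σ.1
      · -- `w ∈ σ` : only the `v = w` term of `H ∂` survives and gives back `σ`.
        rw [hmap_sgl Δ w r h2 (n+1) σ.1 hτ hc, if_neg (fun h => h.2 hw), map_zero, zero_add,
          boundary_sgl Δ n σ.1 σ.2, map_sum,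
          Finset.sum_eq_single_of_mem w hw (fun v hv hvw => by
            rw [map_smul, hmap_sgl Δ w r h2 n (σ.1.erase v)
              (Δ.down_closed hτ (Finset.erase_subset _ _))
              (by rw [Finset.card_erase_of_mem hv, hc]; omega),
              if_neg (fun h => h.2 (Finset.mem_erase.mpr ⟨hvw.symm, hw⟩)), smul_zero]),
          map_smul, hmap_sgl Δ w r h2 n (σ.1.erase w)
            (Δ.down_closed hτ (Finset.erase_subset _ _))
            (by rw [Finset.card_erase_of_mem hw, hc]; omega),
          if_pos ⟨h6 σ.1 hr hw, Finset.notMem_erase w σ.1⟩, Finset.insert_erase hw]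
        have hff : (σ.1.erase w).filter (· < w) = σ.1.filter (· < w) := by
          rw [Finset.filter_erase]
          apply Finset.erase_eq_of_notMem
          intro hcx
          exact lt_irrefl w (Finset.mem_filter.mp hcx).2
        rw [hff, smul_smul, ← pow_add]
        rw [Even.neg_one_pow ⟨(σ.1.filter (· < w)).card, rfl⟩, one_smul, sub_self]
        exact zero_mem _
      · -- `w ∉ σ`, the main case.
        have hfins : insert w σ.1 ∈ Δ.faces := h2 σ.1 hr hw
        have hcins : (insert w σ.1).card = (n+1) + 1 := by
          rw [Finset.card_insert_of_notMem hw, hc]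
        rw [hmap_sgl Δ w r h2 (n+1) σ.1 hτ hc, if_pos ⟨hr, hw⟩, map_smul,
          boundary_sgl Δ (n+1) (insert w σ.1) ⟨hfins, hcins⟩, Finset.sum_insert hw]
        have hfw : (insert w σ.1).filter (· < w) = σ.1.filter (· < w) := by
          rw [Finset.filter_insert, if_neg (lt_irrefl w)]
        rw [hfw, Finset.erase_insert hw, smul_add, smul_smul, ← pow_add,
          Even.neg_one_pow ⟨(σ.1.filter (· < w)).card, rfl⟩, one_smul,
          boundary_sgl Δ n σ.1 σ.2, map_sum]
        have harr : ∀ (g X Y : Δ.Chains k (n+1)), g + X + Y - g = X + Y := by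
          intro g X Y; abel
        rw [harr, Finset.smul_sum, ← Finset.sum_add_distrib]
        refine Submodule.sum_mem _ (fun v hv => ?_)
        have hvw : v ≠ w := fun h => hw (h ▸ hv)
        have he : (insert w σ.1).erase v = insert w (σ.1.erase v) :=
          Finset.erase_insert_of_ne hvw.symm
        rw [smul_smul, map_smul, hmap_sgl Δ w r h2 n (σ.1.erase v)
          (Δ.down_closed hτ (Finset.erase_subset _ _))
          (by rw [Finset.card_erase_of_mem hv, hc]; omega), he]
        by_cases hrv : r (σ.1.erase v)
        · rw [if_pos ⟨hrv, fun hcx => hw (Finset.mem_of_mem_erase hcx)⟩, smul_smul,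
            ← add_smul, sign_cancel2 σ.1 hv hw, neg_add_cancel, zero_smul]
          exact zero_mem _
        · rw [if_neg (fun h => hrv h.1), smul_zero, add_zero]
          exact Submodule.smul_mem _ _
            (sgl_mem_nsub Δ r (n+1) _ c (h5 σ.1 v hr hw hv hrv))
    · rw [hmap_sgl Δ w r h2 (n+1) σ.1 hτ hc, if_neg (fun h => hr h.1), map_zero, zero_add,
        boundary_sgl Δ n σ.1 σ.2, map_sum,
        Finset.sum_eq_zero (fun v hv => by
          rw [map_smul, hmap_sgl Δ w r h2 n (σ.1.erase v)
            (Δ.down_closed hτ (Finset.erase_subset _ _))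
            (by rw [Finset.card_erase_of_mem hv, hc]; omega),
            if_neg (fun h => h4 σ.1 hτ hr v h.1), smul_zero]),
        zero_sub]
      exact neg_mem (sgl_mem_nsub Δ r (n+1) σ.1 c hr)

lemma key0 (h2 : ∀ σ, r σ → w ∉ σ → insert w σ ∈ Δ.faces) (x : Δ.Chains k 0) :
    Δ.boundary k 0 (hmap Δ w r h2 0 x) - x ∈ nsub Δ r 0 := by
  induction x using Finsupp.induction_linear with
  | zero => simpa using zero_mem (nsub Δ r 0)
  | add f g hf hg =>
    have : Δ.boundary k 0 (hmap Δ w r h2 0 (f + g)) - (f + g)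
        = (Δ.boundary k 0 (hmap Δ w r h2 0 f) - f) +
          (Δ.boundary k 0 (hmap Δ w r h2 0 g) - g) := by
      rw [map_add, map_add]; abel
    rw [this]
    exact add_mem hf hg
  | single σ c =>
    have hτ : σ.1 ∈ Δ.faces := σ.2.1
    have hc : σ.1.card = 0 := σ.2.2
    have hemp : σ.1 = ∅ := Finset.card_eq_zero.mp hc
    rw [single_eq_sgl, hemp]
    by_cases hr : r ∅
    · have hτ' : (∅ : Finset V) ∈ Δ.faces := hemp ▸ hτ
      have hwne : w ∉ (∅ : Finset V) := Finset.notMem_empty w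
      rw [hmap_sgl Δ w r h2 0 ∅ hτ' rfl, if_pos ⟨hr, hwne⟩, map_smul,
        boundary_sgl Δ 0 (insert w ∅) ⟨h2 ∅ hr hwne, by simp⟩]
      rw [Finset.sum_insert (Finset.notMem_empty w), Finset.sum_empty, add_zero,
        Finset.erase_insert (Finset.notMem_empty w)]
      have hfw : ((insert w (∅ : Finset V)).filter (· < w)) = ∅ := by
        rw [Finset.filter_insert, if_neg (lt_irrefl w), Finset.filter_empty]
      simp only [hfw, Finset.filter_empty, Finset.card_empty, pow_zero, one_smul]
      rw [sub_self]
      exact zero_mem _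
    · rw [hmap_sgl Δ w r h2 0 ∅ (hemp ▸ hτ) rfl, if_neg (fun h => hr h.1), map_zero, zero_sub]
      exact neg_mem (sgl_mem_nsub Δ r 0 ∅ c hr)

end Homotopy

section Combinatorics

set_option linter.unusedVariables false
set_option linter.unusedSectionVars false

variable {V : Type*} [LinearOrder V]

lemma exists_facet [Fintype V] (Δ : SComplex V) {σ : Finset V} (hσ : σ ∈ Δ.faces) :
    ∃ F ∈ Δ.facets, σ ⊆ F := by
  have hfin : {τ | τ ∈ Δ.faces ∧ σ ⊆ τ}.Finite := Set.toFinite _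
  obtain ⟨F, hF, hmax⟩ := Set.Finite.exists_maximalFor Finset.card _ hfin
    ⟨σ, hσ, Finset.Subset.refl σ⟩
  refine ⟨F, ⟨hF.1, fun G hG hFG => ?_⟩, hF.2⟩
  exact Finset.eq_of_subset_of_card_le hFG
    (hmax ⟨hG, hF.2.trans hFG⟩ (Finset.card_le_card hFG))

lemma facets_generated (Δ : SComplex V) {S : Set (Finset V)} (hS : S ⊆ Δ.facets) :
    (generated S).facets = S := by
  ext F
  constructor
  · rintro ⟨⟨H, hH, hFH⟩, hmax⟩
    have hHf : H ∈ (generated S).faces := ⟨H, hH, Finset.Subset.refl H⟩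
    rw [hmax H hHf hFH]
    exact hH
  · intro hF
    refine ⟨⟨F, hF, Finset.Subset.refl F⟩, fun G hG hFG => ?_⟩
    obtain ⟨H, hH, hGH⟩ := hG
    have hFH : F = H := (hS hF).2 H (hS hH).1 (hFG.trans hGH)
    exact Finset.Subset.antisymm hFG (by rw [hFH]; exact hGH)

lemma generated_faces_subset (Δ : SComplex V) {S : Set (Finset V)} (hS : S ⊆ Δ.facets) :
    (generated S).faces ⊆ Δ.faces := by
  rintro τ ⟨H, hH, hτH⟩
  exact Δ.down_closed (hS hH).1 hτH

lemma reach_exists_neighbor (Δ : SComplex V) {F K : Finset V} (h : Δ.reach F K) :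
    K = F ∨ ∃ H ∈ Δ.facets, H ≠ F ∧ (F ∩ H).Nonempty := by
  induction h with
  | refl => exact Or.inl rfl
  | @tail b c hFb hbc ih =>
    rcases ih with hb | hex
    · by_cases hc : c = F
      · exact Or.inl hc
      · exact Or.inr ⟨c, hbc.2.1, hc, hb ▸ hbc.2.2⟩
    · exact Or.inr hex

lemma reroute (Δ : SComplex V) {F G : Finset V} (hG : G ∈ Δ.facets) (hGF : G ≠ F)
    (hjoint : ∀ H ∈ Δ.facets, H ≠ F → F ∩ H ⊆ G) {A B : Finset V} (h : Δ.reach A B) :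
    (generated (Δ.facets \ {F})).reach (if A = F then G else A) (if B = F then G else B) := by
  have hfac : (generated (Δ.facets \ {F})).facets = Δ.facets \ {F} :=
    facets_generated Δ Set.diff_subset
  induction h with
  | refl => exact Relation.ReflTransGen.refl
  | @tail b c hab hbc ih =>
    refine ih.trans ?_
    obtain ⟨hbf, hcf, hbc'⟩ := hbc
    by_cases hb : b = F <;> by_cases hc : c = F
    · rw [if_pos hb, if_pos hc]
    · rw [if_pos hb, if_neg hc]
      subst hb
      refine Relation.ReflTransGen.single ⟨?_, ?_, ?_⟩
      · rw [hfac]; exact ⟨hG, by simpa using hGF⟩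
      · rw [hfac]; exact ⟨hcf, by simpa using hc⟩
      · obtain ⟨x, hx⟩ := hbc'
        exact ⟨x, Finset.mem_inter.mpr ⟨hjoint c hcf hc hx, (Finset.mem_inter.mp hx).2⟩⟩
    · rw [if_neg hb, if_pos hc]
      subst hc
      refine Relation.ReflTransGen.single ⟨?_, ?_, ?_⟩
      · rw [hfac]; exact ⟨hbf, by simpa using hb⟩
      · rw [hfac]; exact ⟨hG, by simpa using hGF⟩
      · obtain ⟨x, hx⟩ := hbc'
        have hxb : x ∈ b := (Finset.mem_inter.mp hx).1
        have hxF : x ∈ c := (Finset.mem_inter.mp hx).2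
        exact ⟨x, Finset.mem_inter.mpr ⟨hxb,
          hjoint b hbf hb (Finset.mem_inter.mpr ⟨hxF, hxb⟩)⟩⟩
    · rw [if_neg hb, if_neg hc]
      refine Relation.ReflTransGen.single ⟨?_, ?_, hbc'⟩
      · rw [hfac]; exact ⟨hbf, by simpa using hb⟩
      · rw [hfac]; exact ⟨hcf, by simpa using hc⟩

lemma connected_diff (Δ : SComplex V) (hconn : Δ.Connected) {F G : Finset V}
    (hG : G ∈ Δ.facets) (hGF : G ≠ F)
    (hjoint : ∀ H ∈ Δ.facets, H ≠ F → F ∩ H ⊆ G) :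
    (generated (Δ.facets \ {F})).Connected := by
  have hfac : (generated (Δ.facets \ {F})).facets = Δ.facets \ {F} :=
    facets_generated Δ Set.diff_subset
  intro A hA B hB
  rw [hfac] at hA hB
  have hAF : A ≠ F := by simpa using hA.2
  have hBF : B ≠ F := by simpa using hB.2
  have := reroute Δ hG hGF hjoint (hconn A hA.1 B hB.1)
  rwa [if_neg hAF, if_neg hBF] at this

end Combinatorics

section Transfer

set_option linter.unusedVariables false
set_option linter.unusedSectionVars false

variable {V : Type*} [LinearOrder V] {k : Type*} [Field k]
variable (Δ Δ' : SComplex V)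

/-- Inclusion of faces along an inclusion of complexes. -/
def faceIncl (hsub : Δ'.faces ⊆ Δ.faces) (n : ℕ) (τ : Δ'.Face n) : Δ.Face n :=
  ⟨τ.1, hsub τ.2.1, τ.2.2⟩

lemma faceIncl_injective (hsub : Δ'.faces ⊆ Δ.faces) (n : ℕ) :
    Function.Injective (faceIncl Δ Δ' hsub n) :=
  fun a b h => Subtype.ext (show a.1 = b.1 from congrArg (fun t => t.1) h)

/-- Inclusion of chains along an inclusion of complexes. -/
noncomputable def chainIncl (hsub : Δ'.faces ⊆ Δ.faces) (n : ℕ) :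
    Δ'.Chains k n →ₗ[k] Δ.Chains k n :=
  Finsupp.lmapDomain k k (faceIncl Δ Δ' hsub n)

lemma chainIncl_injective (hsub : Δ'.faces ⊆ Δ.faces) (n : ℕ) :
    Function.Injective (chainIncl (k := k) Δ Δ' hsub n) :=
  Finsupp.mapDomain_injective (faceIncl_injective Δ Δ' hsub n)

lemma chainIncl_sgl (hsub : Δ'.faces ⊆ Δ.faces) (n : ℕ) (τ : Finset V)
    (hτ : τ ∈ Δ'.faces) (hc : τ.card = n) (c : k) :
    chainIncl Δ Δ' hsub n (Δ'.sgl n τ c) = Δ.sgl n τ c := by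
  rw [sgl, dif_pos ⟨hτ, hc⟩, chainIncl]
  erw [Finsupp.lmapDomain_apply, Finsupp.mapDomain_single]
  rw [single_eq_sgl]
  rfl

lemma chainIncl_boundary (hsub : Δ'.faces ⊆ Δ.faces) (n : ℕ) (x : Δ'.Chains k (n+1)) :
    Δ.boundary k n (chainIncl Δ Δ' hsub (n+1) x) =
      chainIncl Δ Δ' hsub n (Δ'.boundary k n x) := by
  induction x using Finsupp.induction_linear with
  | zero => simp
  | add f g hf hg => rw [map_add, map_add, map_add, map_add, hf, hg]
  | single σ c =>
    rw [single_eq_sgl, chainIncl_sgl Δ Δ' hsub (n+1) σ.1 σ.2.1 σ.2.2,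
      boundary_sgl Δ n σ.1 ⟨hsub σ.2.1, σ.2.2⟩, boundary_sgl Δ' n σ.1 σ.2, map_sum]
    refine Finset.sum_congr rfl (fun v hv => ?_)
    rw [map_smul, chainIncl_sgl Δ Δ' hsub n (σ.1.erase v)
      (Δ'.down_closed σ.2.1 (Finset.erase_subset _ _))
      (by rw [Finset.card_erase_of_mem hv, σ.2.2]; omega)]

end Transfer

section Main

set_option linter.unusedVariables false
set_option linter.unusedSectionVars false
set_option maxHeartbeats 1000000

variable {V : Type*} [LinearOrder V] [Fintype V] {k : Type*} [Field k]

lemma good_of_tree (k : Type*) [Field k] :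
    ∀ (N : ℕ) (Δ : SComplex V), Δ.facets.ncard ≤ N →
    (∃ v : V, {v} ∈ Δ.faces) → Δ.Connected → Δ.Forest →
    (∀ n, LinearMap.ker (Δ.boundary k n) ≤ LinearMap.range (Δ.boundary k (n+1))) ∧
      Function.Surjective (Δ.boundary k 0) := by
  intro N
  induction N with
  | zero =>
    intro Δ hN hne _ _
    exfalso
    obtain ⟨v, hv⟩ := hne
    obtain ⟨F0, hF0, _⟩ := exists_facet Δ hv
    have hpos : 0 < Δ.facets.ncard := (Set.ncard_pos (Set.toFinite _)).mpr ⟨F0, hF0⟩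
    omega
  | succ N IH =>
    intro Δ hN hne hconn hforest
    obtain ⟨v0, hv0⟩ := hne
    obtain ⟨F0, hF0, _⟩ := exists_facet Δ hv0
    obtain ⟨F, hleaf⟩ := hforest Δ.facets (subset_refl _) ⟨F0, hF0⟩
    have hgf : (generated Δ.facets).facets = Δ.facets := facets_generated Δ (subset_refl _)
    simp only [IsLeaf, IsJoint, hgf] at hleaf
    obtain ⟨hF, hdisj⟩ := hleaf
    rcases hdisj with honly | ⟨G, hGfac, hGF, hjoint⟩
    · -- Base case: `F` is the only facet, `Δ` is a cone with any vertex as apex.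
      have hvF : ∀ σ ∈ Δ.faces, σ ⊆ F := by
        intro σ hσ
        obtain ⟨H, hH, hsH⟩ := exists_facet Δ hσ
        rwa [honly H hH] at hsH
      set w : V := v0 with hwdef
      have hwF : w ∈ F := Finset.singleton_subset_iff.mp (hvF _ hv0)
      set r : Finset V → Prop := fun σ => σ ∈ Δ.faces with hrdef
      have h2 : ∀ σ, r σ → w ∉ σ → insert w σ ∈ Δ.faces := fun σ hσ _ =>
        Δ.down_closed hF.1 (Finset.insert_subset hwF (hvF σ hσ))
      have h4 : ∀ σ, σ ∈ Δ.faces → ¬ r σ → ∀ v, ¬ r (σ.erase v) := fun σ hσ hn _ _ =>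
        hn hσ
      have h5 : ∀ σ v, r σ → w ∉ σ → v ∈ σ → ¬ r (σ.erase v) → ¬ r (insert w (σ.erase v)) :=
        fun σ v hσ _ _ hne' _ => hne' (Δ.down_closed hσ (Finset.erase_subset _ _))
      have h6 : ∀ σ, r σ → w ∈ σ → r (σ.erase w) := fun σ hσ _ =>
        Δ.down_closed hσ (Finset.erase_subset _ _)
      have hzero : ∀ (m : ℕ) (x : Δ.Chains k m), x ∈ nsub Δ r m → x = 0 := by
        intro m x hx
        rw [nsub, Finsupp.mem_supported] at hx
        rw [← Finsupp.support_eq_empty]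
        rw [Finset.eq_empty_iff_forall_notMem]
        intro τ hτ
        exact (hx hτ) τ.2.1
      constructor
      · intro n z hz
        rw [LinearMap.mem_ker] at hz
        have hk := key Δ w r h2 h4 h5 h6 n z
        rw [hz, map_zero, add_zero] at hk
        exact ⟨hmap Δ w r h2 (n+1) z, eq_of_sub_eq_zero (hzero _ _ hk)⟩
      · intro x
        have hk := key0 Δ w r h2 x
        exact ⟨hmap Δ w r h2 0 x, eq_of_sub_eq_zero (hzero _ _ hk)⟩
    · -- Inductive step: remove the leaf `F` with joint `G`.
      set Δ' : SComplex V := generated (Δ.facets \ {F}) with hΔ'def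
      have hfac : Δ'.facets = Δ.facets \ {F} := facets_generated Δ Set.diff_subset
      have hsub : Δ'.faces ⊆ Δ.faces := generated_faces_subset Δ Set.diff_subset
      have hGmem : G ∈ Δ'.faces := ⟨G, ⟨hGfac, by simpa using hGF⟩, Finset.Subset.refl G⟩
      -- find the apex w ∈ F ∩ G
      obtain ⟨H, hHfac, hHF, hFH⟩ := (reach_exists_neighbor Δ (hconn F hF G hGfac)).resolve_left hGF
      obtain ⟨w, hw⟩ := hFH
      have hwF : w ∈ F := (Finset.mem_inter.mp hw).1
      have hwG : w ∈ G := hjoint H hHfac hHF hw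
      -- facts about removed faces
      set r : Finset V → Prop := fun σ => σ ∈ Δ.faces ∧ σ ∉ Δ'.faces with hrdef
      have removed_sub : ∀ σ, r σ → σ ⊆ F := by
        intro σ hσ
        obtain ⟨H', hH', hsH'⟩ := exists_facet Δ hσ.1
        by_cases hH'F : H' = F
        · rwa [hH'F] at hsH'
        · exact absurd (⟨H', ⟨hH', by simpa using hH'F⟩, hsH'⟩ : σ ∈ Δ'.faces) hσ.2
      have face'_sub_G : ∀ τ, τ ∈ Δ'.faces → τ ⊆ F → τ ⊆ G := by
        rintro τ ⟨K, hK, hτK⟩ hτF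
        have hKF : K ≠ F := by simpa using hK.2
        exact (Finset.subset_inter hτF hτK).trans (hjoint K hK.1 hKF)
      have h2 : ∀ σ, r σ → w ∉ σ → insert w σ ∈ Δ.faces := fun σ hσ _ =>
        Δ.down_closed hF.1 (Finset.insert_subset hwF (removed_sub σ hσ))
      have h4 : ∀ σ, σ ∈ Δ.faces → ¬ r σ → ∀ v, ¬ r (σ.erase v) := by
        intro σ hσ hn v hr'
        have hσ' : σ ∈ Δ'.faces := by
          by_contra hh
          exact hn ⟨hσ, hh⟩
        exact hr'.2 (Δ'.down_closed hσ' (Finset.erase_subset _ _))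
      have h5 : ∀ σ v, r σ → w ∉ σ → v ∈ σ → ¬ r (σ.erase v) → ¬ r (insert w (σ.erase v)) := by
        intro σ v hσ hwσ hv hne' hr'
        have h1 : σ.erase v ∈ Δ'.faces := by
          by_contra hh
          exact hne' ⟨Δ.down_closed hσ.1 (Finset.erase_subset _ _), hh⟩
        have h2' : σ.erase v ⊆ G :=
          face'_sub_G _ h1 ((Finset.erase_subset v σ).trans (removed_sub σ hσ))
        exact hr'.2 (Δ'.down_closed hGmem (Finset.insert_subset hwG h2'))
      have h6 : ∀ σ, r σ → w ∈ σ → r (σ.erase w) := by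
        intro σ hσ hwσ
        refine ⟨Δ.down_closed hσ.1 (Finset.erase_subset _ _), fun hh => ?_⟩
        have hsg : σ.erase w ⊆ G :=
          face'_sub_G _ hh ((Finset.erase_subset w σ).trans (removed_sub σ hσ))
        have hσG : σ ⊆ G := by
          intro x hx
          by_cases hxw : x = w
          · rwa [hxw]
          · exact hsg (Finset.mem_erase.mpr ⟨hxw, hx⟩)
        exact hσ.2 (Δ'.down_closed hGmem hσG)
      -- chains in `nsub` come from `Δ'`
      have hNrange : ∀ (m : ℕ) (x : Δ.Chains k m), x ∈ nsub Δ r m →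
          ∃ y, chainIncl Δ Δ' hsub m y = x := by
        intro m x hx
        rw [nsub, Finsupp.mem_supported] at hx
        have hsupp : ↑x.support ⊆ Set.range (faceIncl Δ Δ' hsub m) := by
          intro τ hτ
          have hτ' : τ.1 ∈ Δ'.faces := by
            by_contra hh
            exact (hx hτ) ⟨τ.2.1, hh⟩
          exact ⟨⟨τ.1, hτ', τ.2.2⟩, Subtype.ext rfl⟩
        refine ⟨Finsupp.comapDomain _ x ((faceIncl_injective Δ Δ' hsub m).injOn), ?_⟩
        exact Finsupp.mapDomain_comapDomain _ (faceIncl_injective Δ Δ' hsub m) x hsupp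
      -- apply the induction hypothesis to Δ'
      have hcard : Δ'.facets.ncard ≤ N := by
        rw [hfac, Set.ncard_diff_singleton_of_mem hF]
        omega
      have hne' : ∃ v : V, {v} ∈ Δ'.faces :=
        ⟨w, Δ'.down_closed hGmem (Finset.singleton_subset_iff.mpr hwG)⟩
      have hconn' : Δ'.Connected := connected_diff Δ hconn hGfac hGF hjoint
      have hforest' : Δ'.Forest := by
        intro S hS hSne
        exact hforest S (hS.trans (by rw [hfac]; exact Set.diff_subset)) hSne
      obtain ⟨IH1, IH2⟩ := IH Δ' hcard hne' hconn' hforest'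
      constructor
      · intro n z hz
        rw [LinearMap.mem_ker] at hz
        have hk := key Δ w r h2 h4 h5 h6 n z
        rw [hz, map_zero, add_zero] at hk
        have hmem : z - Δ.boundary k (n+1) (hmap Δ w r h2 (n+1) z) ∈ nsub Δ r (n+1) := by
          have := neg_mem hk
          rwa [neg_sub] at this
        obtain ⟨y, hy⟩ := hNrange _ _ hmem
        have hbz : Δ'.boundary k n y = 0 := by
          apply chainIncl_injective Δ Δ' hsub n
          rw [← chainIncl_boundary Δ Δ' hsub n y, hy, map_sub, hz,
            boundary_boundary Δ n (hmap Δ w r h2 (n+1) z), sub_zero, map_zero]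
        obtain ⟨u, hu⟩ := IH1 n (LinearMap.mem_ker.mpr hbz)
        refine ⟨chainIncl Δ Δ' hsub (n+2) u + hmap Δ w r h2 (n+1) z, ?_⟩
        rw [map_add, chainIncl_boundary Δ Δ' hsub (n+1) u, hu, hy]
        exact sub_add_cancel z _
      · intro x
        have hk := key0 Δ w r h2 x
        have hmem : x - Δ.boundary k 0 (hmap Δ w r h2 0 x) ∈ nsub Δ r 0 := by
          have := neg_mem hk
          rwa [neg_sub] at this
        obtain ⟨y, hy⟩ := hNrange _ _ hmem
        obtain ⟨u, hu⟩ := IH2 y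
        refine ⟨chainIncl Δ Δ' hsub 1 u + hmap Δ w r h2 0 x, ?_⟩
        rw [map_add, chainIncl_boundary Δ Δ' hsub 0 u, hu, hy]
        exact sub_add_cancel x _

end Main

end Aux

end SComplex

lemma finrank_quot_eq_zero {k M : Type*} [Field k] [AddCommGroup M] [Module k M]
    {p : Submodule k M} (h : p = ⊤) : Module.finrank k (M ⧸ p) = 0 := by
  haveI := Submodule.Quotient.subsingleton_iff.mpr h
  exact Module.finrank_zero_of_subsingleton


/-- Every nonempty simplicial tree is acyclic: all its reduced simplicial
homology groups with field coefficients vanish.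
(Recall `redHomDim k Δ c = dim_k H̃_(c-1)(Δ; k)`, so this includes `H̃_(-1)`.) -/
theorem tree_acyclic {V : Type*} [LinearOrder V] [Fintype V] (k : Type*) [Field k]
    (Δ : SComplex V) (hne : ∃ v : V, {v} ∈ Δ.faces)
    (hconn : Δ.Connected) (hforest : Δ.Forest) :
    ∀ c : ℕ, Δ.redHomDim k c = 0 := by
  obtain ⟨hker, hsurj⟩ :=
    SComplex.good_of_tree k Δ.facets.ncard Δ (le_refl _) hne hconn hforest
  intro c
  cases c with
  | zero =>
    show cokerDim k (Δ.boundary k 0) = 0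
    unfold cokerDim
    exact finrank_quot_eq_zero (LinearMap.range_eq_top.mpr hsurj)
  | succ c =>
    show quotDim k (Δ.boundary k (c+1)) (Δ.boundary k c) = 0
    unfold quotDim
    exact finrank_quot_eq_zero (Submodule.comap_subtype_eq_top.mpr (hker c))
end
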